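/- Let α, β be t-bit integers with bits α_i, β_i. Define c_0 = 0 ∈ ℤ and c_{i+1} = c_i − c_i(α_{i+1} + β_{i+1}) + (2c_i − 1)·α_{i+1}·β_{i+1} + α_{i+1} for 0 ≤ i < t. Then each c_i ∈ {0,1}, and c_t = 1 if and only if α > β. -/

import Mathlib

/-!
Let `A_i`, `B_i` be the values of the lowest `i` bits of `α` and `β`. By induction, `c_i` is the
indicator of `B_i < A_i`: since `A_i, B_i < 2^i`, the comparison of `A_{i+1} = A_i + 2^i α_{i+1}`
with `B_{i+1}` is decided by the new top bits when they differ and by the previous comparison when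
they agree, and on bits the recursion computes exactly `if α_{i+1} = β_{i+1} then c_i else α_{i+1}`.
-/

open Finset

lemma sum_range_two_pow_mul_bits_mem_Ico (a : ℕ → ℤ) (ha : ∀ i, a i = 0 ∨ a i = 1) (n : ℕ) :
    ∑ i ∈ range n, 2 ^ i * a i ∈ Set.Ico 0 (2 ^ n) := by
  induction n with
  | zero => simp
  | succ n ih =>
    obtain ⟨h0, hlt⟩ := ih
    rw [sum_range_succ, pow_succ]
    have h2n : (0 : ℤ) < 2 ^ n := by positivity
    constructor <;> rcases ha n with h | h <;> simp only [h] <;> linarith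

lemma add_mul_lt_add_mul_iff_lex {N A B x y : ℤ} (hA : A ∈ Set.Ico 0 N) (hB : B ∈ Set.Ico 0 N) :
    A + N * x < B + N * y ↔ x < y ∨ x = y ∧ A < B := by
  obtain ⟨hA0, hAN⟩ := hA
  obtain ⟨hB0, hBN⟩ := hB
  constructor
  · intro h
    rcases lt_trichotomy x y with hxy | rfl | hxy
    · exact Or.inl hxy
    · exact Or.inr ⟨rfl, by linarith⟩
    · nlinarith
  · rintro (hxy | ⟨rfl, hAB⟩)
    · nlinarith
    · linarith

lemma lsb_step_eq_ite {c x y : ℤ} (hc : c = 0 ∨ c = 1) (hx : x = 0 ∨ x = 1) (hy : y = 0 ∨ y = 1) :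
    c - c * (x + y) + (2 * c - 1) * x * y + x = if x = y then c else x := by
  rcases hc with rfl | rfl <;> rcases hx with rfl | rfl <;> rcases hy with rfl | rfl <;> norm_num

lemma lsb_recursion_eq_ite_lt {t : ℕ} {a b c : ℕ → ℤ}
    (ha : ∀ i, a i = 0 ∨ a i = 1) (hb : ∀ i, b i = 0 ∨ b i = 1) (hc0 : c 0 = 0)
    (hrec : ∀ i < t, c (i + 1) =
      c i - c i * (a i + b i) + (2 * c i - 1) * (a i) * (b i) + a i) :
    ∀ i ≤ t, c i = if ∑ j ∈ range i, 2 ^ j * b j < ∑ j ∈ range i, 2 ^ j * a j then 1 else 0 := by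
  intro i hi
  induction i with
  | zero => simp [hc0]
  | succ i ih =>
    have hci := ih (by omega)
    rw [hrec i (by omega), lsb_step_eq_ite (by rw [hci]; split_ifs <;> simp) (ha i) (hb i), hci,
      sum_range_succ, sum_range_succ]
    simp only [add_mul_lt_add_mul_iff_lex (sum_range_two_pow_mul_bits_mem_Ico b hb i)
      (sum_range_two_pow_mul_bits_mem_Ico a ha i)]
    rcases ha i with h | h <;> rcases hb i with h' | h' <;> simp [h, h']

/-- Optimized LSB recursion (Eq. (5)) over ℤ: with c₀ = 0 and
    c_{i+1} = c_i − c_i(α_{i+1}+β_{i+1}) + (2c_i − 1)α_{i+1}β_{i+1} + α_{i+1},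
    each c_i ∈ {0,1} and c_t = 1 iff α > β. -/
theorem sic_lsb_correct (t : ℕ) (a b : ℕ → ℤ)
    (ha : ∀ i, a i = 0 ∨ a i = 1) (hb : ∀ i, b i = 0 ∨ b i = 1)
    (c : ℕ → ℤ) (hc0 : c 0 = 0)
    (hrec : ∀ i < t, c (i + 1) =
      c i - c i * (a i + b i) + (2 * c i - 1) * (a i) * (b i) + a i) :
    (∀ i ≤ t, c i = 0 ∨ c i = 1) ∧
    (c t = 1 ↔
      (∑ i ∈ Finset.range t, 2 ^ i * a i) > (∑ i ∈ Finset.range t, 2 ^ i * b i)) := by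
  have key := lsb_recursion_eq_ite_lt ha hb hc0 hrec
  refine ⟨fun i hi => ?_, ?_⟩
  · rw [key i hi]
    split_ifs <;> simp
  · rw [key t le_rfl, gt_iff_lt]
    split_ifs <;> simp_all
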